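/- arXiv:2102.03734 — 6 statements merged into one kernel-verified Lean document; each statement's English description precedes it below -/
import Mathlib

section
/- For every ε > 0, B > 0 and x ∈ ℝ with |x|^{1+ε} < B, the set R(x,B) is a compact subset of ℝ², and every (λ1, λ2) ∈ R(x,B) satisfies λ1 ≤ 1/(B^{1/(1+ε)} − x) and λ2 ≤ 1/(B − |x|^{1+ε}). -/
open scoped Classical

/-- The dual feasible region `R(x,B)`, where the term
`ε·λ1^{1+1/ε}/(λ2^{1/ε}(1+ε)^{1+1/ε})` is interpreted as `0` when `λ1 = 0` and as `+∞`
when `λ1 > 0` and `λ2 = 0` (so that the constraint fails in the latter case). -/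
noncomputable def Rset (ε B x : ℝ) : Set (ℝ × ℝ) :=
  {p | 0 ≤ p.1 ∧ 0 ≤ p.2 ∧
    (if p.1 = 0 then B * p.2 - x * p.1 - 1 ≤ 0
     else 0 < p.2 ∧
       ε * p.1 ^ (1 + 1 / ε) / (p.2 ^ (1 / ε) * (1 + ε) ^ (1 + 1 / ε))
         + B * p.2 - x * p.1 - 1 ≤ 0)}

/-!
Young's inequality `c·λ1 ≤ c^{1+ε}/(1+ε) + (ε/(1+ε))·λ1^{(1+ε)/ε}`, applied to `(c·D, λ1/D)` with
`D = (λ2(1+ε))^{1/(1+ε)}`, gives `c·λ1 ≤ φ(λ1,λ2) + c^{1+ε}·λ2` for the first term `φ` of the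
constraint. With `c = B^{1/(1+ε)}` this bounds `(c - x)·λ1` by the constraint's left side plus one,
and with `c = |x|` it does the same for `(B - |x|^{1+ε})·λ2`. Multiplying the constraint by
`λ2^{1/ε}` turns `R(x,B)` into a sublevel set of a continuous function, so it is closed, and being
bounded it is compact.
-/

open Real

theorem young_inequality_perspective {ε c a b : ℝ} (hε : 0 < ε) (hc : 0 ≤ c) (ha : 0 ≤ a)
    (hb : 0 < b) :
    c * a ≤ ε * a ^ (1 + 1 / ε) / (b ^ (1 / ε) * (1 + ε) ^ (1 + 1 / ε)) + c ^ (1 + ε) * b := by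
  have hp : (0 : ℝ) < 1 + ε := by linarith
  have hconj : HolderConjugate (1 + ε) ((1 + ε) / ε) := by
    rw [holderConjugate_iff]
    exact ⟨by linarith, by field_simp⟩
  have hbD : (0 : ℝ) < b * (1 + ε) := by positivity
  set D : ℝ := (b * (1 + ε)) ^ (1 / (1 + ε))
  have hD : 0 < D := rpow_pos_of_pos hbD _
  have hDp : D ^ (1 + ε) = b * (1 + ε) := by
    rw [← rpow_mul hbD.le, one_div_mul_cancel hp.ne', rpow_one]
  have hDq : D ^ ((1 + ε) / ε) = b ^ (1 / ε) * (1 + ε) ^ (1 / ε) := by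
    rw [← rpow_mul hbD.le, show 1 / (1 + ε) * ((1 + ε) / ε) = 1 / ε by field_simp,
      mul_rpow hb.le hp.le]
  have hq : (1 : ℝ) + 1 / ε = (1 + ε) / ε := by field_simp; ring
  have hpq : (1 + ε) ^ ((1 + ε) / ε) = (1 + ε) * (1 + ε) ^ (1 / ε) := by
    rw [← hq, rpow_add hp, rpow_one]
  have hbε : (0 : ℝ) < b ^ (1 / ε) := rpow_pos_of_pos hb _
  have hpε : (0 : ℝ) < (1 + ε) ^ (1 / ε) := rpow_pos_of_pos hp _
  calc c * a = (c * D) * (a / D) := by field_simp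
    _ ≤ (c * D) ^ (1 + ε) / (1 + ε) + (a / D) ^ ((1 + ε) / ε) / ((1 + ε) / ε) :=
        young_inequality_of_nonneg (by positivity) (by positivity) hconj
    _ = ε * a ^ (1 + 1 / ε) / (b ^ (1 / ε) * (1 + ε) ^ (1 + 1 / ε)) + c ^ (1 + ε) * b := by
        rw [mul_rpow hc hD.le, div_rpow ha hD.le, hDp, hDq, hq, hpq]
        field_simp
        ring

section Rset

variable {ε B x : ℝ} {p : ℝ × ℝ}

theorem Rset.fst_eq_zero_of_snd_eq_zero (hp : p ∈ Rset ε B x) (h2 : p.2 = 0) : p.1 = 0 := by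
  by_contra h1
  have := hp.2.2
  rw [if_neg h1] at this
  exact this.1.ne' h2

theorem mem_Rset_iff_of_snd_pos (hε : 0 < ε) (h2 : 0 < p.2) :
    p ∈ Rset ε B x ↔ 0 ≤ p.1 ∧
      ε * p.1 ^ (1 + 1 / ε) / (p.2 ^ (1 / ε) * (1 + ε) ^ (1 + 1 / ε)) + B * p.2 - x * p.1 - 1
        ≤ 0 := by
  simp only [Rset, Set.mem_ofPred_eq, h2.le, h2, true_and]
  split_ifs with h1
  · rw [h1, zero_rpow (by positivity)]
    simp
  · rfl

theorem Rset.fst_le (hε : 0 < ε) (hx : |x| ^ (1 + ε) < B) (hp : p ∈ Rset ε B x) :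
    p.1 ≤ 1 / (B ^ (1 / (1 + ε)) - x) := by
  have hB : 0 ≤ B := (rpow_nonneg (abs_nonneg x) _).trans hx.le
  have hxB : |x| < B ^ (1 / (1 + ε)) := by
    have := rpow_lt_rpow (rpow_nonneg (abs_nonneg x) _) hx (by positivity : (0 : ℝ) < 1 / (1 + ε))
    rwa [← rpow_mul (abs_nonneg x), mul_one_div_cancel (by linarith), rpow_one] at this
  have hden : 0 < B ^ (1 / (1 + ε)) - x := by linarith [le_abs_self x]
  rcases hp.2.1.eq_or_lt with h2 | h2
  · rw [Rset.fst_eq_zero_of_snd_eq_zero hp h2.symm]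
    positivity
  obtain ⟨h1, hφ⟩ := (mem_Rset_iff_of_snd_pos hε h2).1 hp
  have young := young_inequality_perspective hε (rpow_nonneg hB (1 / (1 + ε))) h1 h2
  rw [← rpow_mul hB, one_div_mul_cancel (by linarith), rpow_one] at young
  rw [le_div_iff₀ hden]
  linarith

theorem Rset.snd_le (hε : 0 < ε) (hx : |x| ^ (1 + ε) < B) (hp : p ∈ Rset ε B x) :
    p.2 ≤ 1 / (B - |x| ^ (1 + ε)) := by
  have hden : 0 < B - |x| ^ (1 + ε) := by linarith
  rcases hp.2.1.eq_or_lt with h2 | h2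
  · rw [← h2]
    positivity
  obtain ⟨h1, hφ⟩ := (mem_Rset_iff_of_snd_pos hε h2).1 hp
  have young := young_inequality_perspective hε (abs_nonneg x) h1 h2
  have hxp : x * p.1 ≤ |x| * p.1 := mul_le_mul_of_nonneg_right (le_abs_self x) h1
  rw [le_div_iff₀ hden]
  linarith

theorem Rset_eq_setOf (hε : 0 < ε) :
    Rset ε B x = {p | 0 ≤ p.1 ∧ 0 ≤ p.2 ∧
      ε * p.1 ^ (1 + 1 / ε) / (1 + ε) ^ (1 + 1 / ε) + (B * p.2 - x * p.1 - 1) * p.2 ^ (1 / ε)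
        ≤ 0} := by
  ext p
  have hK : (0 : ℝ) < (1 + ε) ^ (1 + 1 / ε) := rpow_pos_of_pos (by linarith) _
  rcases le_or_gt p.2 0 with h2 | h2
  · constructor
    · intro hp
      have hb : p.2 = 0 := le_antisymm h2 hp.2.1
      have ha : p.1 = 0 := Rset.fst_eq_zero_of_snd_eq_zero hp hb
      rw [Set.mem_ofPred_eq, ha, hb, zero_rpow (by positivity), zero_rpow (by positivity)]
      simp
    · rintro ⟨ha, hb, h⟩
      replace hb : p.2 = 0 := le_antisymm h2 hb
      rw [hb, zero_rpow (by positivity), mul_zero, add_zero, div_le_iff₀ hK, zero_mul] at h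
      have hq : (1 : ℝ) + 1 / ε ≠ 0 := by positivity
      have ha : p.1 = 0 := (rpow_eq_zero ha hq).1 <|
        le_antisymm (nonpos_of_mul_nonpos_right h hε) (rpow_nonneg ha _)
      simp [Rset, ha, hb]
  · have ht : (0 : ℝ) < p.2 ^ (1 / ε) := rpow_pos_of_pos h2 _
    have key : ε * p.1 ^ (1 + 1 / ε) / (1 + ε) ^ (1 + 1 / ε)
        + (B * p.2 - x * p.1 - 1) * p.2 ^ (1 / ε) = (ε * p.1 ^ (1 + 1 / ε) /
          (p.2 ^ (1 / ε) * (1 + ε) ^ (1 + 1 / ε)) + B * p.2 - x * p.1 - 1) * p.2 ^ (1 / ε) := by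
      field_simp
      ring
    rw [mem_Rset_iff_of_snd_pos hε h2, Set.mem_ofPred_eq, key]
    exact ⟨fun ⟨ha, h⟩ => ⟨ha, h2.le, mul_nonpos_of_nonpos_of_nonneg h ht.le⟩,
      fun ⟨ha, _, h⟩ => ⟨ha, nonpos_of_mul_nonpos_left h ht⟩⟩

theorem isClosed_Rset (hε : 0 < ε) : IsClosed (Rset ε B x) := by
  rw [Rset_eq_setOf hε, Set.ofPred_and, Set.ofPred_and]
  refine (isClosed_le continuous_const continuous_fst).inter
    ((isClosed_le continuous_const continuous_snd).inter (isClosed_le ?_ continuous_const))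
  fun_prop (disch := positivity)

end Rset

theorem Rset_isCompact_and_bounds_general (ε B x : ℝ) (hε : 0 < ε)
    (hx : |x| ^ (1 + ε) < B) :
    IsCompact (Rset ε B x) ∧
      ∀ p ∈ Rset ε B x,
        p.1 ≤ 1 / (B ^ (1 / (1 + ε)) - x) ∧ p.2 ≤ 1 / (B - |x| ^ (1 + ε)) := by
  have bounds : ∀ p ∈ Rset ε B x,
      p.1 ≤ 1 / (B ^ (1 / (1 + ε)) - x) ∧ p.2 ≤ 1 / (B - |x| ^ (1 + ε)) :=
    fun p hp => ⟨Rset.fst_le hε hx hp, Rset.snd_le hε hx hp⟩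
  refine ⟨IsCompact.of_isClosed_subset
    (s := Set.Icc 0 (1 / (B ^ (1 / (1 + ε)) - x)) ×ˢ Set.Icc 0 (1 / (B - |x| ^ (1 + ε))))
    (isCompact_Icc.prod isCompact_Icc) (isClosed_Rset hε) fun p hp => ?_, bounds⟩
  exact ⟨⟨hp.1, (bounds p hp).1⟩, ⟨hp.2.1, (bounds p hp).2⟩⟩

/-- For `ε > 0`, `B > 0` and `|x|^{1+ε} < B`, the region `R(x,B)` is compact and every
`(λ1, λ2) ∈ R(x,B)` satisfies `λ1 ≤ 1/(B^{1/(1+ε)} − x)` and `λ2 ≤ 1/(B − |x|^{1+ε})`. -/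
theorem Rset_isCompact_and_bounds (ε B x : ℝ) (hε : 0 < ε) (hB : 0 < B)
    (hx : |x| ^ (1 + ε) < B) :
    IsCompact (Rset ε B x) ∧
      ∀ p ∈ Rset ε B x,
        p.1 ≤ 1 / (B ^ (1 / (1 + ε)) - x) ∧ p.2 ≤ 1 / (B - |x| ^ (1 + ε)) :=
  Rset_isCompact_and_bounds_general ε B x hε hx
end

section
/- For fixed ε > 0, B > 0 and η ∈ 𝓟(ℝ), the function x ↦ KLinf(η, x) is convex on the interval (−B^{1/(1+ε)}, B^{1/(1+ε)}): for all x1, x2 in this interval and λ ∈ (0,1), KLinf(η, λ x1 + (1−λ) x2) ≤ λ KLinf(η, x1) + (1−λ) KLinf(η, x2). -/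
/-!
If `κ₁` and `κ₂` are admissible for `KLinf(η, x₁)` and `KLinf(η, x₂)`, then the mixture
`κ = l κ₁ + (1 - l) κ₂` is admissible for `l x₁ + (1 - l) x₂`, because the moment constraint and the
mean are linear in the measure. It remains to show that `KL(η, ·)` is convex. Since
`(dη/dκ)⁻¹ = dκ/dη = l (dη/dκ₁)⁻¹ + (1 - l) (dη/dκ₂)⁻¹` η-a.e., concavity of `log` gives
`log dη/dκ ≤ l log dη/dκ₁ + (1 - l) log dη/dκ₂` pointwise, and the same identity bounds
`|log dη/dκ|` by `|log dη/dκ₁| + |log dη/dκ₂|`, so `log dη/dκ` is integrable. Taking infima over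
`κ₁` and `κ₂` concludes.
-/

open MeasureTheory
open scoped ENNReal Classical

/-- The class of probability measures on `ℝ` with `(1+ε)`-th absolute moment bounded by `B`. -/
def LBm (ε B : ℝ) : Set (Measure ℝ) :=
  {κ | IsProbabilityMeasure κ ∧ ∫⁻ y, ENNReal.ofReal (|y| ^ (1 + ε)) ∂κ ≤ ENNReal.ofReal B}

/-- The mean of a measure on `ℝ`. -/
noncomputable def mean (κ : Measure ℝ) : ℝ := ∫ y, y ∂κ

/-- Kullback-Leibler divergence `KL(η, κ) = ∫ log (dη/dκ) dη` if `η ≪ κ` (and the integral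
is defined), and `+∞` otherwise. -/
noncomputable def KL (η κ : Measure ℝ) : ℝ≥0∞ :=
  if η ≪ κ ∧ Integrable (fun y => Real.log ((η.rnDeriv κ y).toReal)) η
  then ENNReal.ofReal (∫ y, Real.log ((η.rnDeriv κ y).toReal) ∂η)
  else ⊤

/-- `KLinf(η, x) = inf { KL(η, κ) : κ ∈ 𝓛_B, m(κ) ≥ x }`. -/
noncomputable def KLinf (ε B : ℝ) (η : Measure ℝ) (x : ℝ) : ℝ≥0∞ :=
  ⨅ (κ : Measure ℝ) (_ : κ ∈ LBm ε B ∧ x ≤ mean κ), KL η κ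

lemma ENNReal.le_mul_iInf₂_add_mul_iInf₂ {ι ι' : Type*} {p : ι → Prop} {q : ι' → Prop}
    {f : ι → ℝ≥0∞} {g : ι' → ℝ≥0∞} {a b c : ℝ≥0∞} (ha₀ : a ≠ 0) (ha : a ≠ ⊤) (hb₀ : b ≠ 0)
    (hb : b ≠ ⊤) (h : ∀ i, p i → ∀ j, q j → c ≤ a * f i + b * g j) :
    c ≤ a * (⨅ (i) (_ : p i), f i) + b * ⨅ (j) (_ : q j), g j := by
  rw [iInf_subtype', iInf_subtype', ENNReal.mul_iInf_of_ne ha₀ ha, ENNReal.mul_iInf_of_ne hb₀ hb,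
    ENNReal.iInf_add]
  refine le_iInf fun i => ?_
  rw [ENNReal.add_iInf]
  exact le_iInf fun j => h i i.2 j j.2

lemma log_le_of_inv_eq_convexComb {a b c l : ℝ} (ha : 0 < a) (hb : 0 < b) (hl₀ : 0 ≤ l)
    (hl₁ : l ≤ 1) (h : c⁻¹ = l * a⁻¹ + (1 - l) * b⁻¹) :
    Real.log c ≤ l * Real.log a + (1 - l) * Real.log b := by
  have hconc := strictConcaveOn_log_Ioi.concaveOn.2 (Set.mem_Ioi.2 (inv_pos.2 ha))
    (Set.mem_Ioi.2 (inv_pos.2 hb)) hl₀ (sub_nonneg.2 hl₁) (add_sub_cancel l 1)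
  simp only [smul_eq_mul, ← h, Real.log_inv] at hconc
  linarith

lemma abs_log_le_of_inv_eq_convexComb {a b c l : ℝ} (ha : 0 < a) (hb : 0 < b) (hl₀ : 0 ≤ l)
    (hl₁ : l ≤ 1) (h : c⁻¹ = l * a⁻¹ + (1 - l) * b⁻¹) :
    |Real.log c| ≤ |Real.log a| + |Real.log b| := by
  set S := |Real.log a| + |Real.log b|
  have hup : Real.log c ≤ S := by
    have := log_le_of_inv_eq_convexComb ha hb hl₀ hl₁ h
    nlinarith [le_abs_self (Real.log a), le_abs_self (Real.log b), abs_nonneg (Real.log a),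
      abs_nonneg (Real.log b)]
  have hinv_le : ∀ t > 0, |Real.log t| ≤ S → t⁻¹ ≤ Real.exp S := fun t ht hS => by
    rw [← Real.exp_log (inv_pos.2 ht), Real.log_inv]
    exact Real.exp_le_exp.2 ((neg_le_abs _).trans hS)
  have hlow : Real.log c⁻¹ ≤ S := by
    have hc : 0 < c⁻¹ := h ▸ convex_Ioi (0 : ℝ) (inv_pos.2 ha) (inv_pos.2 hb) hl₀
      (sub_nonneg.2 hl₁) (add_sub_cancel l 1)
    have hca := hinv_le a ha (le_add_of_nonneg_right (abs_nonneg _))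
    have hcb := hinv_le b hb (le_add_of_nonneg_left (abs_nonneg _))
    rw [Real.log_le_iff_le_exp hc, h]
    nlinarith
  rw [Real.log_inv] at hlow
  exact abs_le.2 ⟨by linarith, hup⟩

noncomputable def mixture {α : Type*} [MeasurableSpace α] (l : ℝ) (μ ν : Measure α) : Measure α :=
  ENNReal.ofReal l • μ + ENNReal.ofReal (1 - l) • ν

section Mixture

variable {α : Type*} [MeasurableSpace α] {l : ℝ} {μ ν : Measure α}

instance [IsFiniteMeasure μ] [IsFiniteMeasure ν] : IsFiniteMeasure (mixture l μ ν) :=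
  have := μ.smul_finite (ENNReal.ofReal_ne_top (r := l))
  have := ν.smul_finite (ENNReal.ofReal_ne_top (r := 1 - l))
  inferInstanceAs (IsFiniteMeasure (_ + _))

lemma isProbabilityMeasure_mixture [IsProbabilityMeasure μ] [IsProbabilityMeasure ν]
    (hl₀ : 0 ≤ l) (hl₁ : l ≤ 1) : IsProbabilityMeasure (mixture l μ ν) := by
  constructor
  simp [mixture, ← ENNReal.ofReal_add hl₀ (sub_nonneg.2 hl₁)]

lemma lintegral_mixture (f : α → ℝ≥0∞) :
    ∫⁻ y, f y ∂(mixture l μ ν) = ENNReal.ofReal l * ∫⁻ y, f y ∂μ +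
      ENNReal.ofReal (1 - l) * ∫⁻ y, f y ∂ν := by
  rw [mixture, lintegral_add_measure, lintegral_smul_measure, lintegral_smul_measure, smul_eq_mul,
    smul_eq_mul]

lemma integral_mixture {f : α → ℝ} (hμ : Integrable f μ) (hν : Integrable f ν) (hl₀ : 0 ≤ l)
    (hl₁ : l ≤ 1) : ∫ y, f y ∂(mixture l μ ν) = l * ∫ y, f y ∂μ + (1 - l) * ∫ y, f y ∂ν := by
  rw [mixture, integral_add_measure (hμ.smul_measure ENNReal.ofReal_ne_top)
    (hν.smul_measure ENNReal.ofReal_ne_top), integral_smul_measure, integral_smul_measure,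
    ENNReal.toReal_ofReal hl₀, ENNReal.toReal_ofReal (sub_nonneg.2 hl₁), smul_eq_mul, smul_eq_mul]

lemma absolutelyContinuous_mixture {η : Measure α} (h : η ≪ μ) (hl : 0 < l) :
    η ≪ mixture l μ ν :=
  (h.trans (Measure.absolutelyContinuous_smul (ENNReal.ofReal_pos.2 hl).ne')).add_right _

lemma inv_rnDeriv_mixture {η : Measure α} [SigmaFinite η] [IsFiniteMeasure μ]
    [IsFiniteMeasure ν] (hμ : η ≪ μ) (hν : η ≪ ν) (hl : 0 < l) :
    (η.rnDeriv (mixture l μ ν))⁻¹ =ᵐ[η]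
      ENNReal.ofReal l • (η.rnDeriv μ)⁻¹ + ENNReal.ofReal (1 - l) • (η.rnDeriv ν)⁻¹ := by
  have := μ.smul_finite (ENNReal.ofReal_ne_top (r := l))
  have := ν.smul_finite (ENNReal.ofReal_ne_top (r := 1 - l))
  filter_upwards [Measure.inv_rnDeriv (absolutelyContinuous_mixture (ν := ν) hμ hl),
    Measure.rnDeriv_add (ENNReal.ofReal l • μ) (ENNReal.ofReal (1 - l) • ν) η,
    Measure.rnDeriv_smul_left_of_ne_top μ η ENNReal.ofReal_ne_top,
    Measure.rnDeriv_smul_left_of_ne_top ν η ENNReal.ofReal_ne_top,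
    Measure.inv_rnDeriv hμ, Measure.inv_rnDeriv hν] with y h h_add hsμ hsν hinvμ hinvν
  simp only [Pi.inv_apply, Pi.add_apply, Pi.smul_apply] at *
  rw [h, mixture, h_add, hsμ, hsν, hinvμ, hinvν]

lemma ae_inv_toReal_rnDeriv_mixture {η : Measure α} [SigmaFinite η] [IsFiniteMeasure μ]
    [IsFiniteMeasure ν] (hμ : η ≪ μ) (hν : η ≪ ν) (hl₀ : 0 < l) (hl₁ : l ≤ 1) :
    ∀ᵐ y ∂η, 0 < (η.rnDeriv μ y).toReal ∧ 0 < (η.rnDeriv ν y).toReal ∧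
      ((η.rnDeriv (mixture l μ ν) y).toReal)⁻¹ =
        l * ((η.rnDeriv μ y).toReal)⁻¹ + (1 - l) * ((η.rnDeriv ν y).toReal)⁻¹ := by
  filter_upwards [inv_rnDeriv_mixture hμ hν hl₀, Measure.rnDeriv_pos hμ, Measure.rnDeriv_pos hν,
    hμ.ae_le (Measure.rnDeriv_ne_top η μ), hν.ae_le (Measure.rnDeriv_ne_top η ν)]
    with y h hposμ hposν htopμ htopν
  simp only [Pi.inv_apply, Pi.add_apply, Pi.smul_apply, smul_eq_mul] at h
  refine ⟨ENNReal.toReal_pos hposμ.ne' htopμ, ENNReal.toReal_pos hposν.ne' htopν, ?_⟩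
  rw [← ENNReal.toReal_inv, h, ENNReal.toReal_add (by finiteness) (by finiteness),
    ENNReal.toReal_mul, ENNReal.toReal_mul, ENNReal.toReal_ofReal hl₀.le,
    ENNReal.toReal_ofReal (sub_nonneg.2 hl₁), ENNReal.toReal_inv, ENNReal.toReal_inv]

end Mixture

lemma KL_mixture_le (η μ ν : Measure ℝ) [SigmaFinite η] [IsFiniteMeasure μ] [IsFiniteMeasure ν]
    {l : ℝ} (hl₀ : 0 < l) (hl₁ : l < 1) :
    KL η (mixture l μ ν) ≤ ENNReal.ofReal l * KL η μ + ENNReal.ofReal (1 - l) * KL η ν := by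
  by_cases hμ : η ≪ μ ∧ Integrable (fun y => Real.log ((η.rnDeriv μ y).toReal)) η
  swap
  · rw [show KL η μ = ⊤ from if_neg hμ, ENNReal.mul_top (ENNReal.ofReal_pos.2 hl₀).ne', top_add]
    exact le_top
  by_cases hν : η ≪ ν ∧ Integrable (fun y => Real.log ((η.rnDeriv ν y).toReal)) η
  swap
  · rw [show KL η ν = ⊤ from if_neg hν,
      ENNReal.mul_top (ENNReal.ofReal_pos.2 (sub_pos.2 hl₁)).ne', add_top]
    exact le_top
  have hac : η ≪ mixture l μ ν := absolutelyContinuous_mixture hμ.1 hl₀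
  have hlog : ∀ᵐ y ∂η, Real.log ((η.rnDeriv (mixture l μ ν) y).toReal) ≤
        l * Real.log ((η.rnDeriv μ y).toReal) + (1 - l) * Real.log ((η.rnDeriv ν y).toReal) ∧
      |Real.log ((η.rnDeriv (mixture l μ ν) y).toReal)| ≤
        |Real.log ((η.rnDeriv μ y).toReal)| + |Real.log ((η.rnDeriv ν y).toReal)| := by
    filter_upwards [ae_inv_toReal_rnDeriv_mixture hμ.1 hν.1 hl₀ hl₁.le] with y ⟨ha, hb, h⟩
    exact ⟨log_le_of_inv_eq_convexComb ha hb hl₀.le hl₁.le h,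
      abs_log_le_of_inv_eq_convexComb ha hb hl₀.le hl₁.le h⟩
  have hint : Integrable (fun y => Real.log ((η.rnDeriv (mixture l μ ν) y).toReal)) η :=
    (hμ.2.abs.add hν.2.abs).mono'
      (Measure.measurable_rnDeriv η _).ennreal_toReal.log.aestronglyMeasurable
      (hlog.mono fun y h => h.2)
  have hint_le : ∫ y, Real.log ((η.rnDeriv (mixture l μ ν) y).toReal) ∂η ≤
      l * ∫ y, Real.log ((η.rnDeriv μ y).toReal) ∂η +
        (1 - l) * ∫ y, Real.log ((η.rnDeriv ν y).toReal) ∂η := by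
    rw [← integral_const_mul, ← integral_const_mul, ← integral_add (hμ.2.const_mul l)
      (hν.2.const_mul (1 - l))]
    exact integral_mono_ae hint ((hμ.2.const_mul l).add (hν.2.const_mul (1 - l)))
      (hlog.mono fun y h => h.1)
  unfold KL
  rw [if_pos ⟨hac, hint⟩, if_pos hμ, if_pos hν, ← ENNReal.ofReal_mul hl₀.le,
    ← ENNReal.ofReal_mul (sub_nonneg.2 hl₁.le)]
  exact (ENNReal.ofReal_le_ofReal hint_le).trans ENNReal.ofReal_add_le

lemma integrable_id_of_mem_LBm {ε B : ℝ} (hε : 0 ≤ ε) {κ : Measure ℝ} (hκ : κ ∈ LBm ε B) :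
    Integrable (fun y : ℝ => y) κ := by
  have := hκ.1
  refine ⟨measurable_id.aestronglyMeasurable, ?_⟩
  rw [hasFiniteIntegral_iff_norm]
  have hle : ∀ y : ℝ, ENNReal.ofReal ‖y‖ ≤ 1 + ENNReal.ofReal (|y| ^ (1 + ε)) := fun y => by
    rw [Real.norm_eq_abs, ← ENNReal.ofReal_one, ← ENNReal.ofReal_add zero_le_one (by positivity)]
    refine ENNReal.ofReal_le_ofReal ?_
    rcases le_total |y| 1 with h | h
    · linarith [Real.rpow_nonneg (abs_nonneg y) (1 + ε)]
    · linarith [Real.self_le_rpow_of_one_le h (by linarith : (1 : ℝ) ≤ 1 + ε)]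
  calc ∫⁻ y, ENNReal.ofReal ‖y‖ ∂κ ≤ ∫⁻ y, (1 + ENNReal.ofReal (|y| ^ (1 + ε))) ∂κ :=
        lintegral_mono hle
    _ = 1 + ∫⁻ y, ENNReal.ofReal (|y| ^ (1 + ε)) ∂κ := by
        rw [lintegral_add_left measurable_const, lintegral_const, measure_univ, mul_one]
    _ < ⊤ := ENNReal.add_lt_top.2 ⟨ENNReal.one_lt_top, hκ.2.trans_lt ENNReal.ofReal_lt_top⟩

lemma mixture_mem_LBm {ε B l : ℝ} (hl₀ : 0 ≤ l) (hl₁ : l ≤ 1) {μ ν : Measure ℝ}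
    (hμ : μ ∈ LBm ε B) (hν : ν ∈ LBm ε B) : mixture l μ ν ∈ LBm ε B := by
  have := hμ.1
  have := hν.1
  refine ⟨isProbabilityMeasure_mixture hl₀ hl₁, ?_⟩
  rw [lintegral_mixture]
  calc _ ≤ ENNReal.ofReal l * ENNReal.ofReal B + ENNReal.ofReal (1 - l) * ENNReal.ofReal B := by
        gcongr
        exacts [hμ.2, hν.2]
    _ = ENNReal.ofReal B := by
        rw [← add_mul, ← ENNReal.ofReal_add hl₀ (sub_nonneg.2 hl₁), add_sub_cancel,
          ENNReal.ofReal_one, one_mul]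

lemma KLinf_le_KL_mixture {ε B l x₁ x₂ : ℝ} (hε : 0 ≤ ε) (hl₀ : 0 ≤ l) (hl₁ : l ≤ 1)
    (η : Measure ℝ) {μ ν : Measure ℝ} (hμ : μ ∈ LBm ε B) (hx₁ : x₁ ≤ mean μ) (hν : ν ∈ LBm ε B)
    (hx₂ : x₂ ≤ mean ν) : KLinf ε B η (l * x₁ + (1 - l) * x₂) ≤ KL η (mixture l μ ν) := by
  have hmean : l * x₁ + (1 - l) * x₂ ≤ mean (mixture l μ ν) := by
    rw [mean, integral_mixture (integrable_id_of_mem_LBm hε hμ) (integrable_id_of_mem_LBm hε hν)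
      hl₀ hl₁]
    exact add_le_add (mul_le_mul_of_nonneg_left hx₁ hl₀)
      (mul_le_mul_of_nonneg_left hx₂ (sub_nonneg.2 hl₁))
  exact iInf₂_le _ ⟨mixture_mem_LBm hl₀ hl₁ hμ hν, hmean⟩

theorem klinf_convex_general (ε B : ℝ) (hε : 0 < ε)
    (η : Measure ℝ) (hη : IsProbabilityMeasure η) :
    ∀ x1 ∈ Set.Ioo (-(B ^ (1 / (1 + ε)))) (B ^ (1 / (1 + ε))),
    ∀ x2 ∈ Set.Ioo (-(B ^ (1 / (1 + ε)))) (B ^ (1 / (1 + ε))),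
    ∀ l : ℝ, l ∈ Set.Ioo (0 : ℝ) 1 →
      KLinf ε B η (l * x1 + (1 - l) * x2) ≤
        ENNReal.ofReal l * KLinf ε B η x1 + ENNReal.ofReal (1 - l) * KLinf ε B η x2 := by
  intro x1 _ x2 _ l ⟨hl₀, hl₁⟩
  refine ENNReal.le_mul_iInf₂_add_mul_iInf₂ (ENNReal.ofReal_pos.2 hl₀).ne' ENNReal.ofReal_ne_top
    (ENNReal.ofReal_pos.2 (sub_pos.2 hl₁)).ne' ENNReal.ofReal_ne_top ?_
  rintro μ ⟨hμ, hx₁⟩ ν ⟨hν, hx₂⟩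
  have := hμ.1
  have := hν.1
  exact (KLinf_le_KL_mixture hε.le hl₀.le hl₁.le η hμ hx₁ hν hx₂).trans
    (KL_mixture_le η μ ν hl₀ hl₁)

/-- For fixed `ε > 0`, `B > 0` and a probability measure `η` on `ℝ`, the map
`x ↦ KLinf(η, x)` is convex on `(−B^{1/(1+ε)}, B^{1/(1+ε)})`. -/
theorem klinf_convex (ε B : ℝ) (hε : 0 < ε) (hB : 0 < B)
    (η : Measure ℝ) (hη : IsProbabilityMeasure η) :
    ∀ x1 ∈ Set.Ioo (-(B ^ (1 / (1 + ε)))) (B ^ (1 / (1 + ε))),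
    ∀ x2 ∈ Set.Ioo (-(B ^ (1 / (1 + ε)))) (B ^ (1 / (1 + ε))),
    ∀ l : ℝ, l ∈ Set.Ioo (0 : ℝ) 1 →
      KLinf ε B η (l * x1 + (1 - l) * x2) ≤
        ENNReal.ofReal l * KLinf ε B η x1 + ENNReal.ofReal (1 - l) * KLinf ε B η x2 :=
  klinf_convex_general ε B hε η hη
end

section
/- For fixed ε > 0, x ∈ ℝ and η ∈ 𝓟(ℝ), the function B ↦ KLinf_B(η, x) is continuous on the open interval (|x|^{1+ε}, ∞). -/
open MeasureTheory
open scoped ENNReal Classical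

/-!
Write `m = |x|^(1+ε)` and let `m < B₁ ≤ B₂`. Mixing a measure `κ` admissible for `B₂` with the
Dirac mass at `x`, `κ' = a κ + (1 - a) δₓ` with `a = (B₁ - m)/(B₂ - m)`, gives a measure admissible
for `B₁`: its mean is still at least `x` and its moment is at most `a B₂ + (1 - a) m = B₁`. Since
`κ' ≥ a κ`, the likelihood ratio only decreases, so `KL(η, κ') ≤ KL(η, κ) - log a`. Hence
`KLinf_{B₂} ≤ KLinf_{B₁} ≤ KLinf_{B₂} + log ((B₂ - m)/(B₁ - m))`, and the correction term tends
to `0` as `B₁, B₂` approach each other.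
-/

open Real Filter Topology

section LogLikelihoodRatio

variable {α : Type*} [MeasurableSpace α] {μ ν ν' : Measure α}

lemma one_sub_toReal_rnDeriv_le_llr [SigmaFinite μ] [SigmaFinite ν] (hμν : μ ≪ ν) :
    ∀ᵐ x ∂μ, 1 - (ν.rnDeriv μ x).toReal ≤ llr μ ν x := by
  filter_upwards [exp_neg_llr hμν] with x hx
  linarith [hx ▸ add_one_le_exp (-llr μ ν x)]

lemma llr_add_right_le [SigmaFinite μ] [SigmaFinite ν] [SigmaFinite ν'] (hμν : μ ≪ ν) :
    ∀ᵐ x ∂μ, llr μ (ν + ν') x ≤ llr μ ν x := by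
  have hμν' : μ ≪ ν + ν' := hμν.add_right ν'
  filter_upwards [exp_neg_llr hμν, exp_neg_llr hμν', Measure.rnDeriv_add' ν ν' μ,
    Measure.rnDeriv_lt_top ν μ, Measure.rnDeriv_lt_top ν' μ] with x h h' hadd hlt hlt'
  have hrn : (ν.rnDeriv μ x).toReal ≤ ((ν + ν').rnDeriv μ x).toReal := by
    rw [hadd, Pi.add_apply, ENNReal.toReal_add hlt.ne hlt'.ne]
    exact le_add_of_nonneg_right ENNReal.toReal_nonneg
  rw [← h, ← h', exp_le_exp] at hrn
  linarith

lemma MeasureTheory.Integrable.llr_add_right [IsFiniteMeasure μ] [IsFiniteMeasure ν]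
    [IsFiniteMeasure ν'] (hint : Integrable (llr μ ν) μ) (hμν : μ ≪ ν) :
    Integrable (llr μ (ν + ν')) μ :=
  integrable_of_le_of_le (measurable_llr _ _).aestronglyMeasurable
    (one_sub_toReal_rnDeriv_le_llr (hμν.add_right ν')) (llr_add_right_le hμν)
    ((integrable_const 1).sub Measure.integrable_toReal_rnDeriv) hint

end LogLikelihoodRatio

section KL

variable {η κ : Measure ℝ}

lemma KL_of_ac_of_integrable (hηκ : η ≪ κ) (hint : Integrable (llr η κ) η) :
    KL η κ = ENNReal.ofReal (∫ y, llr η κ y ∂η) :=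
  if_pos ⟨hηκ, hint⟩

lemma KL_of_not_ac_and_integrable (h : ¬(η ≪ κ ∧ Integrable (llr η κ) η)) : KL η κ = ⊤ :=
  if_neg h

lemma KL_add_right_le [IsFiniteMeasure η] [IsFiniteMeasure κ] (ν : Measure ℝ)
    [IsFiniteMeasure ν] : KL η (κ + ν) ≤ KL η κ := by
  by_cases h : η ≪ κ ∧ Integrable (llr η κ) η
  · obtain ⟨hηκ, hint⟩ := h
    rw [KL_of_ac_of_integrable (hηκ.add_right ν) (hint.llr_add_right hηκ),
      KL_of_ac_of_integrable hηκ hint]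
    exact ENNReal.ofReal_le_ofReal
      (integral_mono_ae (hint.llr_add_right hηκ) hint (llr_add_right_le hηκ))
  · rw [KL_of_not_ac_and_integrable h]
    exact le_top

lemma KL_smul_right_le [IsProbabilityMeasure η] [IsFiniteMeasure κ] {a : ℝ} (ha : 0 < a) :
    KL η (ENNReal.ofReal a • κ) ≤ KL η κ + ENNReal.ofReal (-log a) := by
  by_cases h : η ≪ κ ∧ Integrable (llr η κ) η
  · obtain ⟨hηκ, hint⟩ := h
    have ha' : ENNReal.ofReal a ≠ 0 := (ENNReal.ofReal_pos.2 ha).ne'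
    have hllr : llr η (ENNReal.ofReal a • κ) =ᵐ[η] fun y ↦ llr η κ y - log a := by
      simpa only [ENNReal.toReal_ofReal ha.le] using
        llr_smul_right hηκ _ ha' ENNReal.ofReal_ne_top
    have hint' := (hint.sub (integrable_const (log a))).congr hllr.symm
    rw [KL_of_ac_of_integrable (hηκ.smul_right ha') hint', KL_of_ac_of_integrable hηκ hint,
      integral_congr_ae hllr, integral_sub hint (integrable_const _), integral_const,
      probReal_univ, one_smul, sub_eq_add_neg]
    exact ENNReal.ofReal_add_le
  · rw [KL_of_not_ac_and_integrable h, top_add]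
    exact le_top

end KL

instance MeasureTheory.isFiniteMeasure_ofReal_smul {α : Type*} [MeasurableSpace α]
    {μ : Measure α} [IsFiniteMeasure μ] (a : ℝ) : IsFiniteMeasure (ENNReal.ofReal a • μ) :=
  ⟨ENNReal.mul_lt_top ENNReal.ofReal_lt_top (measure_lt_top μ _)⟩

section Mixture

variable {κ : Measure ℝ} {a x : ℝ}

lemma mixture_mem_LBm_s7 {ε B : ℝ} (hκ : κ ∈ LBm ε B) (hB : 0 ≤ B) (ha₀ : 0 ≤ a) (ha₁ : a ≤ 1) :
    ENNReal.ofReal a • κ + ENNReal.ofReal (1 - a) • Measure.dirac x ∈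
      LBm ε (a * B + (1 - a) * |x| ^ (1 + ε)) := by
  obtain ⟨hprob, hmom⟩ := hκ
  have hm : 0 ≤ |x| ^ (1 + ε) := by positivity
  refine ⟨⟨?_⟩, ?_⟩
  · simp only [Measure.coe_add, Measure.coe_smul, Pi.add_apply, Pi.smul_apply, measure_univ,
      smul_eq_mul, mul_one]
    rw [← ENNReal.ofReal_add ha₀ (by linarith), add_sub_cancel, ENNReal.ofReal_one]
  · rw [lintegral_add_measure, lintegral_smul_measure, lintegral_smul_measure, lintegral_dirac,
      ENNReal.ofReal_add (by positivity) (mul_nonneg (by linarith) hm),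
      ENNReal.ofReal_mul ha₀, ENNReal.ofReal_mul (by linarith), smul_eq_mul, smul_eq_mul]
    gcongr

lemma le_mean_mixture (ha₀ : 0 < a) (ha₁ : a ≤ 1) (hx : x ≤ mean κ) :
    x ≤ mean (ENNReal.ofReal a • κ + ENNReal.ofReal (1 - a) • Measure.dirac x) := by
  have ha : ENNReal.ofReal a ≠ 0 := (ENNReal.ofReal_pos.2 ha₀).ne'
  unfold mean at hx ⊢
  by_cases hint : Integrable (fun y ↦ y) κ
  · have hdirac : Integrable (fun y : ℝ ↦ y) (Measure.dirac x) := integrable_dirac (by simp)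
    rw [integral_add_measure ((integrable_smul_measure ha ENNReal.ofReal_ne_top).2 hint)
      (hdirac.smul_measure ENNReal.ofReal_ne_top), integral_smul_measure, integral_smul_measure,
      integral_dirac, ENNReal.toReal_ofReal ha₀.le, ENNReal.toReal_ofReal (by linarith),
      smul_eq_mul, smul_eq_mul]
    nlinarith
  -- Both means are the junk value `0`: mixing preserves non-integrability.
  · have hint' : ¬Integrable (fun y ↦ y)
        (ENNReal.ofReal a • κ + ENNReal.ofReal (1 - a) • Measure.dirac x) := by
      rw [integrable_add_measure, integrable_smul_measure ha ENNReal.ofReal_ne_top]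
      exact fun h ↦ hint h.1
    rwa [integral_undef hint', ← integral_undef hint]

end Mixture

lemma KLinf_antitone (ε : ℝ) (η : Measure ℝ) (x : ℝ) : Antitone fun B ↦ KLinf ε B η x :=
  fun _ _ hB ↦ biInf_mono fun _ ⟨⟨hprob, hmom⟩, hmean⟩ ↦
    ⟨⟨hprob, hmom.trans (ENNReal.ofReal_le_ofReal hB)⟩, hmean⟩

lemma KLinf_le_KLinf_add_log (ε : ℝ) (η : Measure ℝ) [IsProbabilityMeasure η] {x B₁ B₂ : ℝ}
    (hB₁ : |x| ^ (1 + ε) < B₁) (hB₁₂ : B₁ ≤ B₂) :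
    KLinf ε B₁ η x ≤
      KLinf ε B₂ η x + ENNReal.ofReal (log ((B₂ - |x| ^ (1 + ε)) / (B₁ - |x| ^ (1 + ε)))) := by
  set m := |x| ^ (1 + ε)
  have hm : 0 ≤ m := by positivity
  set a := (B₁ - m) / (B₂ - m)
  have ha₀ : 0 < a := div_pos (by linarith) (by linarith)
  have ha₁ : a ≤ 1 := div_le_one_of_le₀ (by linarith) (by linarith)
  have hB : a * B₂ + (1 - a) * m = B₁ := by
    have : B₂ - m ≠ 0 := by linarith
    simp only [a]
    field_simp
    ring
  have hlog : log ((B₂ - m) / (B₁ - m)) = -log a := by rw [← log_inv, inv_div]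
  simp only [KLinf, ENNReal.iInf_add, hlog]
  refine le_iInf₂ fun κ ⟨hκ, hmean⟩ ↦ ?_
  have := hκ.1
  refine (iInf₂_le _ ⟨hB ▸ mixture_mem_LBm_s7 hκ (by linarith) ha₀.le ha₁,
    le_mean_mixture ha₀ ha₁ hmean⟩).trans ?_
  exact (KL_add_right_le _).trans (KL_smul_right_le ha₀)

lemma KLinf_le_KLinf_add_abs_log (ε : ℝ) (η : Measure ℝ) [IsProbabilityMeasure η] {x B₁ B₂ : ℝ}
    (hB₁ : |x| ^ (1 + ε) < B₁) :
    KLinf ε B₁ η x ≤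
      KLinf ε B₂ η x + ENNReal.ofReal |log ((B₂ - |x| ^ (1 + ε)) / (B₁ - |x| ^ (1 + ε)))| := by
  rcases le_total B₁ B₂ with h | h
  · exact (KLinf_le_KLinf_add_log ε η hB₁ h).trans (by gcongr; exact le_abs_self _)
  · exact (KLinf_antitone ε η x h).trans le_self_add

lemma ENNReal.continuousWithinAt_of_le_add {α : Type*} [TopologicalSpace α] {f δ : α → ℝ≥0∞}
    {s : Set α} {a : α} (hδ : Tendsto δ (𝓝[s] a) (𝓝 0)) (hle : ∀ b ∈ s, f a ≤ f b + δ b)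
    (hge : ∀ b ∈ s, f b ≤ f a + δ b) : ContinuousWithinAt f s a := by
  have hlower : Tendsto (fun b ↦ f a - δ b) (𝓝[s] a) (𝓝 (f a)) := by
    simpa using ENNReal.Tendsto.sub tendsto_const_nhds hδ (Or.inr ENNReal.zero_ne_top)
  have hupper : Tendsto (fun b ↦ f a + δ b) (𝓝[s] a) (𝓝 (f a)) := by
    simpa using tendsto_const_nhds.add hδ
  exact tendsto_of_tendsto_of_tendsto_of_le_of_le' hlower hupper
    (eventually_nhdsWithin_of_forall fun b hb ↦ tsub_le_iff_right.2 (hle b hb))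
    (eventually_nhdsWithin_of_forall hge)

theorem klinf_continuousOn_B_general (ε x : ℝ)
    (η : Measure ℝ) (hη : IsProbabilityMeasure η) :
    ContinuousOn (fun B => KLinf ε B η x) (Set.Ioi (|x| ^ (1 + ε))) := by
  intro B hB
  set m := |x| ^ (1 + ε)
  have hBm : B - m ≠ 0 := sub_ne_zero.2 (ne_of_gt hB)
  have hδ : Tendsto (fun b ↦ ENNReal.ofReal |log ((b - m) / (B - m))|) (𝓝 B) (𝓝 0) := by
    have : ContinuousAt (fun b ↦ ENNReal.ofReal |log ((b - m) / (B - m))|) B :=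
      ENNReal.continuous_ofReal.continuousAt.comp (continuousAt_id.sub_const m |>.div_const _
        |>.log (by simp [hBm])).abs
    simpa [div_self hBm] using this.tendsto
  refine ENNReal.continuousWithinAt_of_le_add (hδ.mono_left nhdsWithin_le_nhds)
    (fun b _ ↦ KLinf_le_KLinf_add_abs_log ε η hB) fun b hb ↦ ?_
  rw [← abs_neg, ← log_inv, inv_div]
  exact KLinf_le_KLinf_add_abs_log ε η hb

/-- For fixed `ε > 0`, `x ∈ ℝ` and probability measure `η`, the map `B ↦ KLinf_B(η, x)` is
continuous on the open interval `(|x|^{1+ε}, ∞)`. -/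
theorem klinf_continuousOn_B (ε x : ℝ) (hε : 0 < ε)
    (η : Measure ℝ) (hη : IsProbabilityMeasure η) :
    ContinuousOn (fun B => KLinf ε B η x) (Set.Ioi (|x| ^ (1 + ε))) :=
  klinf_continuousOn_B_general ε x η hη
end

section
/- Let Λ ⊆ ℝ^d be a compact convex set with positive Lebesgue measure and let q be the uniform probability distribution on Λ (normalized Lebesgue measure restricted to Λ). Let g_1, …, g_T : Λ → ℝ be functions such that each λ ↦ exp(g_t(λ)) is concave on Λ. Then sup_{λ ∈ Λ} Σ_{t=1}^T g_t(λ) ≤ log ∫ exp( Σ_{t=1}^T g_t(λ) ) dq(λ) + d·log(T + 1) + 1. -/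
/-!
Fix `p ∈ Λ` and `a = (T + 1)⁻¹`. The homothetic copy `p + a • (Λ - p)` lies in `Λ` and has
`q`-mass `a ^ d`, and on it concavity gives `exp (gₜ y) ≥ (1 - a) exp (gₜ p)` for every `t`. Hence
`∫ exp (∑ₜ gₜ) dq ≥ a ^ d (1 - a) ^ T exp (∑ₜ gₜ p)`, and `(1 - a) ^ T = (1 + 1/T) ^ (-T) ≥ e⁻¹`.
The integral is finite because a concave function on a compact convex body is bounded above and
continuous off the boundary, which is null.
-/

open MeasureTheory ProbabilityTheory Set AffineMap Module Real
open scoped ENNReal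

theorem Real.exp_neg_one_le_one_sub_inv_pow (n : ℕ) : exp (-1) ≤ (1 - ((n : ℝ) + 1)⁻¹) ^ n := by
  rcases n.eq_zero_or_pos with rfl | hn
  · simp
  have heq : 1 - ((n : ℝ) + 1)⁻¹ = (1 + (n : ℝ)⁻¹)⁻¹ := by field_simp; ring
  rw [heq, inv_pow, exp_neg]
  exact inv_anti₀ (by positivity) one_add_inv_pow_le_exp

section Homothety

variable {E : Type*} [AddCommGroup E] [Module ℝ E] {s : Set E} {p x : E} {a : ℝ}

theorem Convex.image_homothety_subset (hs : Convex ℝ s) (hp : p ∈ s) (ha₀ : 0 ≤ a) (ha₁ : a ≤ 1) :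
    homothety p a '' s ⊆ s := by
  rintro _ ⟨x, hx, rfl⟩
  exact homothety_eq_lineMap p a x ▸ hs.lineMap_mem hp hx ⟨ha₀, ha₁⟩

theorem ConcaveOn.one_sub_mul_le_apply_homothety {f : E → ℝ} (hf : ConcaveOn ℝ s f) (hp : p ∈ s)
    (hx : x ∈ s) (hfx : 0 ≤ f x) (ha₀ : 0 ≤ a) (ha₁ : a ≤ 1) :
    (1 - a) * f p ≤ f (homothety p a x) := by
  have h := hf.2 hp hx (sub_nonneg.2 ha₁) ha₀ (sub_add_cancel 1 a)
  rw [homothety_eq_lineMap, lineMap_apply_module]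
  simp only [smul_eq_mul] at h
  linarith [mul_nonneg ha₀ hfx]

theorem one_sub_pow_card_mul_exp_sum_le {ι : Type*} {I : Finset ι} {g : ι → E → ℝ}
    (hg : ∀ i ∈ I, ConcaveOn ℝ s fun x => exp (g i x)) (hp : p ∈ s) (hx : x ∈ s) (ha₀ : 0 ≤ a)
    (ha₁ : a ≤ 1) :
    (1 - a) ^ I.card * exp (∑ i ∈ I, g i p) ≤ exp (∑ i ∈ I, g i (homothety p a x)) := by
  rw [exp_sum, exp_sum, ← Finset.prod_const, ← Finset.prod_mul_distrib]
  exact Finset.prod_le_prod (fun i _ => mul_nonneg (sub_nonneg.2 ha₁) (exp_pos _).le) fun i hi =>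
    (hg i hi).one_sub_mul_le_apply_homothety hp hx (exp_pos _).le ha₀ ha₁

end Homothety

section AddHaar

variable {E : Type*} [NormedAddCommGroup E] [NormedSpace ℝ E] [FiniteDimensional ℝ E] {s : Set E}

theorem ConcaveOn.bddAbove_image {f : E → ℝ} (hf : ConcaveOn ℝ s f) (hs : IsCompact s)
    (hint : (interior s).Nonempty) : BddAbove (f '' s) := by
  obtain ⟨c, hc⟩ := hint
  -- `f` is bounded by `M` on the compact set `(s + c) / 2 ⊆ interior s`, where it is continuous,
  -- and `f x ≤ 2 f ((x + c) / 2) - f c` by concavity.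
  set φ : E → E := fun x => (1 / 2 : ℝ) • x + (1 / 2 : ℝ) • c
  have hφ : MapsTo φ s (interior s) := fun x hx =>
    hf.1.combo_self_interior_mem_interior hx hc (by norm_num) (by norm_num) (by norm_num)
  obtain ⟨M, hM⟩ := (hs.image (by fun_prop : Continuous φ)).bddAbove_image
    (hf.continuousOn_interior.mono hφ.image_subset)
  refine ⟨2 * M - f c, ?_⟩
  rintro _ ⟨x, hx, rfl⟩
  have hmid : (1 / 2 : ℝ) • f x + (1 / 2 : ℝ) • f c ≤ f (φ x) :=
    hf.2 hx (interior_subset hc) (by norm_num) (by norm_num) (by norm_num)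
  have hφx : f (φ x) ≤ M := hM (mem_image_of_mem f (mem_image_of_mem φ hx))
  simp only [smul_eq_mul] at hmid
  linarith

variable [MeasurableSpace E] [BorelSpace E] (μ : Measure E) [μ.IsAddHaarMeasure]

theorem Convex.interior_nonempty_of_measure_pos (hs : Convex ℝ s) (h : 0 < μ s) :
    (interior s).Nonempty :=
  nonempty_of_measure_ne_zero <|
    (measure_congr (interior_ae_eq_of_null_frontier (hs.addHaar_frontier μ))).trans_ne h.ne'

theorem ConcaveOn.aestronglyMeasurable_restrict {f : E → ℝ} (hf : ConcaveOn ℝ s f) :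
    AEStronglyMeasurable f (μ.restrict s) := by
  rw [Measure.restrict_congr_set (interior_ae_eq_of_null_frontier (hf.1.addHaar_frontier μ)).symm]
  exact hf.continuousOn_interior.aestronglyMeasurable measurableSet_interior

variable {μ} in
theorem integrableOn_prod_of_concaveOn {ι : Type*} {I : Finset ι} {f : ι → E → ℝ}
    (hs : IsCompact s) (hint : (interior s).Nonempty) (hf : ∀ i ∈ I, ConcaveOn ℝ s (f i))
    (hf₀ : ∀ i ∈ I, ∀ x ∈ s, 0 ≤ f i x) : IntegrableOn (fun x => ∏ i ∈ I, f i x) s μ := by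
  choose! M hM using fun i hi => (hf i hi).bddAbove_image hs hint
  refine .of_bound hs.measure_lt_top
    (I.aestronglyMeasurable_fun_prod fun i hi => (hf i hi).aestronglyMeasurable_restrict μ)
    (∏ i ∈ I, M i) (ae_restrict_of_forall_mem hs.measurableSet fun x hx => ?_)
  rw [Real.norm_of_nonneg (I.prod_nonneg fun i hi => hf₀ i hi x hx)]
  exact I.prod_le_prod (fun i hi => hf₀ i hi x hx) fun i hi => hM i hi (mem_image_of_mem _ hx)

theorem cond_image_homothety (hs : Convex ℝ s) (hs_meas : MeasurableSet s) (hμs₀ : μ s ≠ 0)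
    (hμs : μ s ≠ ∞) {p : E} (hp : p ∈ s) {a : ℝ} (ha₀ : 0 ≤ a) (ha₁ : a ≤ 1) :
    μ[homothety p a '' s | s] = ENNReal.ofReal (a ^ finrank ℝ E) := by
  rw [cond_apply hs_meas, inter_eq_right.2 (hs.image_homothety_subset hp ha₀ ha₁),
    Measure.addHaar_image_homothety, abs_of_nonneg (by positivity), mul_left_comm,
    ENNReal.inv_mul_cancel hμs₀ hμs, mul_one]

variable {μ} {ι : Type*} {I : Finset ι} {g : ι → E → ℝ}

theorem integrable_exp_sum_cond (hs : IsCompact s) (hconv : Convex ℝ s) (hμs : 0 < μ s)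
    (hg : ∀ i ∈ I, ConcaveOn ℝ s fun x => exp (g i x)) :
    Integrable (fun x => exp (∑ i ∈ I, g i x)) μ[|s] := by
  simp_rw [exp_sum]
  exact (integrableOn_prod_of_concaveOn hs (hconv.interior_nonempty_of_measure_pos μ hμs) hg
    fun i _ x _ => (exp_pos _).le).smul_measure (ENNReal.inv_ne_top.2 hμs.ne')

theorem pow_mul_exp_sum_le_integral_cond (hs : IsCompact s) (hconv : Convex ℝ s) (hμs : 0 < μ s)
    (hg : ∀ i ∈ I, ConcaveOn ℝ s fun x => exp (g i x)) {p : E} (hp : p ∈ s) {a : ℝ}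
    (ha₀ : 0 ≤ a) (ha₁ : a ≤ 1) :
    a ^ finrank ℝ E * ((1 - a) ^ I.card * exp (∑ i ∈ I, g i p)) ≤
      ∫ x, exp (∑ i ∈ I, g i x) ∂μ[|s] := by
  have hint := integrable_exp_sum_cond hs hconv hμs hg
  have hS : IsCompact (homothety p a '' s) := hs.image (homothety_continuous p a)
  calc a ^ finrank ℝ E * ((1 - a) ^ I.card * exp (∑ i ∈ I, g i p))
      = (1 - a) ^ I.card * exp (∑ i ∈ I, g i p) * (μ[|s]).real (homothety p a '' s) := by
        rw [measureReal_def, cond_image_homothety μ hconv hs.measurableSet hμs.ne'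
          hs.measure_lt_top.ne hp ha₀ ha₁, ENNReal.toReal_ofReal (by positivity), mul_comm]
    _ ≤ ∫ x in homothety p a '' s, exp (∑ i ∈ I, g i x) ∂μ[|s] := by
        refine setIntegral_ge_of_const_le_real hS.measurableSet (measure_ne_top _ _) ?_
          hint.integrableOn
        rintro _ ⟨x, hx, rfl⟩
        exact one_sub_pow_card_mul_exp_sum_le hg hp hx ha₀ ha₁
    _ ≤ ∫ x, exp (∑ i ∈ I, g i x) ∂μ[|s] :=
        setIntegral_le_integral hint (.of_forall fun _ => (exp_pos _).le)

end AddHaar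

/-- Mixture bound for exp-concave functions: if `Λ ⊆ ℝ^d` is compact convex with positive
Lebesgue measure, `q` is the uniform distribution on `Λ`, and each `g_t` is exp-concave on
`Λ`, then `sup_{λ ∈ Λ} Σ_t g_t(λ) ≤ log ∫ exp(Σ_t g_t) dq + d log(T+1) + 1`. -/
theorem expConcave_mixture_bound (d T : ℕ)
    (Λ : Set (Fin d → ℝ)) (hΛc : IsCompact Λ) (hΛconv : Convex ℝ Λ)
    (hΛvol : 0 < volume Λ)
    (g : ℕ → (Fin d → ℝ) → ℝ)
    (hg : ∀ t ∈ Finset.range T, ConcaveOn ℝ Λ (fun p => Real.exp (g t p))) :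
    ∀ p ∈ Λ, ∑ t ∈ Finset.range T, g t p ≤
      Real.log (∫ q, Real.exp (∑ t ∈ Finset.range T, g t q)
          ∂((volume Λ)⁻¹ • volume.restrict Λ))
        + d * Real.log ((T : ℝ) + 1) + 1 := by
  intro p hp
  rw [show (volume Λ)⁻¹ • volume.restrict Λ = volume[|Λ] from rfl]
  have hT : (0 : ℝ) < T + 1 := by positivity
  have hbound := pow_mul_exp_sum_le_integral_cond hΛc hΛconv hΛvol hg hp
    (inv_nonneg.2 hT.le) (inv_le_one_of_one_le₀ (le_add_of_nonneg_left T.cast_nonneg))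
  rw [finrank_fin_fun, Finset.card_range] at hbound
  have hexp : exp (∑ t ∈ Finset.range T, g t p - d * log (T + 1) - 1) ≤
      ∫ q, exp (∑ t ∈ Finset.range T, g t q) ∂volume[|Λ] := calc
    _ = ((T + 1 : ℝ) ^ d)⁻¹ * (exp (-1) * exp (∑ t ∈ Finset.range T, g t p)) := by
      rw [exp_sub, exp_sub, exp_nat_mul, exp_log hT, exp_neg]
      ring
    _ ≤ ((T : ℝ) + 1)⁻¹ ^ d * ((1 - ((T : ℝ) + 1)⁻¹) ^ T * exp (∑ t ∈ Finset.range T, g t p)) := by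
      rw [inv_pow]
      gcongr
      exact exp_neg_one_le_one_sub_inv_pow T
    _ ≤ _ := hbound
  have := (le_log_iff_exp_le ((exp_pos _).trans_le hexp)).2 hexp
  linarith
end

section
/- Let X be a real random variable whose cumulant generating function Λ(θ) := log E[e^{θX}] is finite for all θ ∈ [−1, 1], and suppose m := E[X] > 0. Let I(x) := sup_{θ ∈ ℝ} ( θ·x − Λ(θ) ) be the Legendre–Fenchel transform of Λ. Then there exist δ0 > 0 and c > 0 such that for all δ ∈ [0, δ0], I(m − δ) ≥ c·δ². -/
open MeasureTheory
open scoped ENNReal Classical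

/-- The cumulant generating function `θ ↦ log E[e^{θX}]`, with value `+∞` when `e^{θX}` is
not integrable. -/
noncomputable def cgfE {Ω : Type*} [MeasurableSpace Ω] (X : Ω → ℝ) (P : Measure Ω)
    (θ : ℝ) : EReal :=
  if Integrable (fun ω => Real.exp (θ * X ω)) P
  then ((Real.log (∫ ω, Real.exp (θ * X ω) ∂P) : ℝ) : EReal)
  else ⊤

/-- The Legendre–Fenchel transform `I(x) = sup_θ (θx − Λ(θ))` of the cumulant generating
function. -/
noncomputable def rateFn {Ω : Type*} [MeasurableSpace Ω] (X : Ω → ℝ) (P : Measure Ω)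
    (x : ℝ) : EReal :=
  ⨆ θ : ℝ, ((θ * x : ℝ) : EReal) - cgfE X P θ

/-! The elementary bound `e^t ≤ 1 + t + t² e^{|t|}` gives, for `|θ| ≤ 1/2`,
`Λ(θ) ≤ log (1 + θ m + θ² E[X² e^{|X|/2}]) ≤ θ m + K θ²` with `K = E[X² e^{|X|/2}] + 1`, which is
finite because `E[e^{±X}] < ∞`. Testing the supremum defining `I(m - δ)` at `θ = -δ / (2K)` then
gives `I(m - δ) ≥ δ² / (4K)` for `0 ≤ δ ≤ K`. -/

open Real ProbabilityTheory

theorem Real.exp_le_one_add_add_sq_mul_exp_abs (t : ℝ) :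
    exp t ≤ 1 + t + t ^ 2 * exp |t| := by
  have h_inv : exp t * exp (-t) = 1 := by rw [← exp_add, add_neg_cancel, exp_zero]
  have h_neg : -t + 1 ≤ exp (-t) := add_one_le_exp _
  rcases le_or_gt 0 t with ht | ht
  · rw [abs_of_nonneg ht]
    nlinarith [exp_pos t, mul_le_mul_of_nonneg_left h_neg (exp_pos t).le]
  · rw [abs_of_neg ht]
    nlinarith [exp_pos t, exp_pos (-t), add_one_le_exp t,
      mul_le_mul_of_nonneg_left h_neg (exp_pos t).le,
      mul_le_mul_of_nonneg_left h_neg (mul_nonneg (sq_nonneg t) (exp_pos (-t)).le)]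

theorem Real.exp_mul_le_of_abs_le {θ s : ℝ} (hθ : |θ| ≤ s) (x : ℝ) :
    exp (θ * x) ≤ 1 + θ * x + θ ^ 2 * (x ^ 2 * exp (s * |x|)) := by
  have h_abs : |θ * x| ≤ s * |x| := by
    rw [abs_mul]; exact mul_le_mul_of_nonneg_right hθ (abs_nonneg x)
  calc exp (θ * x) ≤ 1 + θ * x + (θ * x) ^ 2 * exp |θ * x| :=
        exp_le_one_add_add_sq_mul_exp_abs _
    _ ≤ 1 + θ * x + (θ * x) ^ 2 * exp (s * |x|) := by gcongr
    _ = 1 + θ * x + θ ^ 2 * (x ^ 2 * exp (s * |x|)) := by ring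

namespace ProbabilityTheory

variable {Ω : Type*} [MeasurableSpace Ω] {μ : Measure Ω} [IsProbabilityMeasure μ] {X : Ω → ℝ}
  {θ s : ℝ}

theorem mgf_le_of_abs_le (hθ : |θ| ≤ s) (h_exp : Integrable (fun ω => exp (θ * X ω)) μ)
    (hX : Integrable X μ) (h_sq : Integrable (fun ω => X ω ^ 2 * exp (s * |X ω|)) μ) :
    mgf X μ θ ≤ 1 + θ * μ[X] + θ ^ 2 * ∫ ω, X ω ^ 2 * exp (s * |X ω|) ∂μ := by
  have h_lin : Integrable (fun ω => 1 + θ * X ω) μ := (integrable_const 1).add (hX.const_mul θ)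
  calc mgf X μ θ
      ≤ ∫ ω, (1 + θ * X ω) + θ ^ 2 * (X ω ^ 2 * exp (s * |X ω|)) ∂μ :=
        integral_mono h_exp (h_lin.add (h_sq.const_mul _))
          fun ω => exp_mul_le_of_abs_le hθ (X ω)
    _ = 1 + θ * μ[X] + θ ^ 2 * ∫ ω, X ω ^ 2 * exp (s * |X ω|) ∂μ := by
        rw [integral_add h_lin (h_sq.const_mul _),
          integral_add (integrable_const 1) (hX.const_mul θ), integral_const_mul,
          integral_const_mul]
        simp

theorem cgf_le_of_abs_le (hθ : |θ| ≤ s) (h_exp : Integrable (fun ω => exp (θ * X ω)) μ)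
    (hX : Integrable X μ) (h_sq : Integrable (fun ω => X ω ^ 2 * exp (s * |X ω|)) μ) :
    cgf X μ θ ≤ θ * μ[X] + θ ^ 2 * ∫ ω, X ω ^ 2 * exp (s * |X ω|) ∂μ := by
  calc cgf X μ θ = log (mgf X μ θ) := rfl
    _ ≤ mgf X μ θ - 1 := log_le_sub_one_of_pos (mgf_pos' (IsProbabilityMeasure.ne_zero μ) h_exp)
    _ ≤ θ * μ[X] + θ ^ 2 * ∫ ω, X ω ^ 2 * exp (s * |X ω|) ∂μ := by
        linarith [mgf_le_of_abs_le hθ h_exp hX h_sq]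

end ProbabilityTheory

theorem sub_cgf_le_rateFn {Ω : Type*} [MeasurableSpace Ω] {P : Measure Ω} {X : Ω → ℝ} {θ : ℝ}
    (h_exp : Integrable (fun ω => exp (θ * X ω)) P) (x : ℝ) :
    ((θ * x - cgf X P θ : ℝ) : EReal) ≤ rateFn X P x := by
  have h_cgf : cgfE X P θ = (cgf X P θ : EReal) := if_pos h_exp
  rw [EReal.coe_sub, ← h_cgf]
  exact le_iSup (fun θ : ℝ => ((θ * x : ℝ) : EReal) - cgfE X P θ) θ

theorem rateFn_quadratic_lower_bound_general {Ω : Type*} [MeasurableSpace Ω] (P : Measure Ω)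
    [IsProbabilityMeasure P] (X : Ω → ℝ)
    (hmgf : ∀ θ ∈ Set.Icc (-1 : ℝ) 1, Integrable (fun ω => Real.exp (θ * X ω)) P) :
    ∃ δ0 : ℝ, 0 < δ0 ∧ ∃ c : ℝ, 0 < c ∧ ∀ δ ∈ Set.Icc (0 : ℝ) δ0,
      ((c * δ ^ 2 : ℝ) : EReal) ≤ rateFn X P ((∫ ω, X ω ∂P) - δ) := by
  have h_pos := hmgf 1 (by norm_num)
  have h_neg := hmgf (-1) (by norm_num)
  have hX : Integrable X P := by
    simpa using integrable_pow_of_integrable_exp_mul one_ne_zero h_pos h_neg 1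
  have h_sq : Integrable (fun ω => X ω ^ 2 * exp (2⁻¹ * |X ω|)) P := by
    simpa using integrable_pow_abs_mul_exp_add_of_integrable_exp_mul (v := 0) (t := 1)
      (x := 2⁻¹) (by simpa using h_pos) (by simpa using h_neg) (by norm_num) (by norm_num) 2
  set G := ∫ ω, X ω ^ 2 * exp (2⁻¹ * |X ω|) ∂P
  have hG : 0 ≤ G := integral_nonneg fun ω => by positivity
  set K := G + 1
  refine ⟨K, by positivity, (4 * K)⁻¹, by positivity, fun δ ⟨hδ0, hδK⟩ => ?_⟩
  set θ := -δ / (2 * K)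
  have hθ : |θ| ≤ 2⁻¹ := by
    rw [abs_div, abs_neg, abs_of_nonneg hδ0, abs_of_pos (by positivity),
      div_le_iff₀ (by positivity)]
    linarith
  have h_exp := hmgf θ ⟨by linarith [(abs_le.1 hθ).1], by linarith [(abs_le.1 hθ).2]⟩
  refine le_trans (EReal.coe_le_coe_iff.2 ?_) (sub_cgf_le_rateFn h_exp _)
  calc (4 * K)⁻¹ * δ ^ 2 = θ * (P[X] - δ) - (θ * P[X] + θ ^ 2 * K) := by
        simp only [θ]; field_simp; ring
    _ ≤ θ * (P[X] - δ) - (θ * P[X] + θ ^ 2 * G) := by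
        gcongr; exact le_add_of_nonneg_right zero_le_one
    _ ≤ θ * (P[X] - δ) - cgf X P θ := by
        gcongr; exact cgf_le_of_abs_le hθ h_exp hX h_sq

/-- If the cumulant generating function of `X` is finite on `[−1, 1]` and `m := E[X] > 0`,
then there exist `δ0 > 0` and `c > 0` such that `I(m − δ) ≥ c·δ²` for all `δ ∈ [0, δ0]`. -/
theorem rateFn_quadratic_lower_bound {Ω : Type*} [MeasurableSpace Ω] (P : Measure Ω)
    [IsProbabilityMeasure P] (X : Ω → ℝ) (hX : Measurable X)
    (hmgf : ∀ θ ∈ Set.Icc (-1 : ℝ) 1, Integrable (fun ω => Real.exp (θ * X ω)) P)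
    (hm : 0 < ∫ ω, X ω ∂P) :
    ∃ δ0 : ℝ, 0 < δ0 ∧ ∃ c : ℝ, 0 < c ∧ ∀ δ ∈ Set.Icc (0 : ℝ) δ0,
      ((c * δ ^ 2 : ℝ) : EReal) ≤ rateFn X P ((∫ ω, X ω ∂P) - δ) :=
  rateFn_quadratic_lower_bound_general P X hmgf
end

section
/- Let η̃ > 0, a > 0, M ∈ ℕ, and let (n_k)_{k≥1} be real numbers with n_k ≥ (1+η̃)^{k−2} for every k. Then Σ_{k=1}^{M} (1+η̃)^{k−1} · exp(−n_k·a) ≤ ((1+η̃)/a) · ( exp(−a/(1+η̃)) / log(1+η̃) + 1/e ). -/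
/-!
Put `q = 1 + η̃` and `φ t = t e^{-t}`. Since `n_k a ≥ a q^{k-2}`, the `k`-th term is at most
`(q / a) φ(a q^{k-2})`. The function `x ↦ φ(a q^{x-2})` is unimodal and bounded by `1/e`, hence
its values at consecutive integers sum to at most its integral plus `1/e`: inductively, the
smaller of the two endpoint terms is dominated by the integral over the adjacent unit interval. The
integral is explicit, since `-e^{-a q^{x-2}} / log q` is an antiderivative, and over `[1, ∞)`
it is at most `e^{-a/q} / log q`.
-/

open Real Finset

namespace QuasiconcaveOn

variable {f : ℝ → ℝ}

lemma min_le_of_mem_Icc (hf : QuasiconcaveOn ℝ Set.univ f) {x y z : ℝ}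
    (hy : y ∈ Set.Icc x z) : min (f x) (f z) ≤ f y :=
  ((hf (min (f x) (f z))).ordConnected.out ⟨trivial, min_le_left _ _⟩
    ⟨trivial, min_le_right _ _⟩ hy).2

lemma comp_monotone (hf : QuasiconcaveOn ℝ Set.univ f) {u : ℝ → ℝ} (hu : Monotone u) :
    QuasiconcaveOn ℝ Set.univ (f ∘ u) := fun _ =>
  convex_iff_ordConnected.mpr ⟨fun _ hx _ hz _ hy =>
    ⟨trivial, (le_min hx.2 hz.2).trans (hf.min_le_of_mem_Icc ⟨hu hy.1, hu hy.2⟩)⟩⟩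

lemma min_mul_le_integral (hf : QuasiconcaveOn ℝ Set.univ f) {y a b z : ℝ}
    (hint : IntervalIntegrable f MeasureTheory.volume a b)
    (hya : y ≤ a) (hab : a ≤ b) (hbz : b ≤ z) :
    (b - a) * min (f y) (f z) ≤ ∫ x in a..b, f x := by
  calc (b - a) * min (f y) (f z) = ∫ _ in a..b, min (f y) (f z) := by
        rw [intervalIntegral.integral_const, smul_eq_mul]
    _ ≤ ∫ x in a..b, f x :=
        intervalIntegral.integral_mono_on hab intervalIntegrable_const hint fun _ hx =>
          hf.min_le_of_mem_Icc ⟨hya.trans hx.1, hx.2.trans hbz⟩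

theorem sum_range_succ_le_integral_add (hf : QuasiconcaveOn ℝ Set.univ f)
    (hint : ∀ a b, IntervalIntegrable f MeasureTheory.volume a b) {B : ℝ}
    (hB : ∀ x, f x ≤ B) (x₀ : ℝ) (n : ℕ) :
    ∑ k ∈ range (n + 1), f (x₀ + k) ≤ (∫ x in x₀..x₀ + n, f x) + B := by
  induction n generalizing x₀ with
  | zero => simpa using hB x₀
  | succ n ih =>
    have hn0 : (0 : ℝ) ≤ n := n.cast_nonneg
    push_cast
    rcases le_total (f x₀) (f (x₀ + (n + 1))) with hle | hle
    · have hfirst := hf.min_mul_le_integral (hint x₀ (x₀ + 1)) le_rfl (by linarith)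
        (by linarith : x₀ + 1 ≤ x₀ + (n + 1))
      rw [min_eq_left hle, add_sub_cancel_left, one_mul] at hfirst
      have hsplit := intervalIntegral.integral_add_adjacent_intervals
        (hint x₀ (x₀ + 1)) (hint (x₀ + 1) (x₀ + 1 + n))
      have hshift : ∀ k : ℕ, x₀ + ((k + 1 : ℕ) : ℝ) = x₀ + 1 + k := fun k => by
        push_cast; ring
      rw [sum_range_succ', show x₀ + (n + 1) = x₀ + 1 + n by ring]
      simp only [hshift, Nat.cast_zero, add_zero]
      linarith [ih (x₀ + 1)]
    · have hlast := hf.min_mul_le_integral (hint (x₀ + n) (x₀ + (n + 1)))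
        (by linarith : x₀ ≤ x₀ + n) (by linarith) le_rfl
      rw [min_eq_right hle, show x₀ + (n + 1) - (x₀ + n) = 1 by ring, one_mul] at hlast
      have hsplit := intervalIntegral.integral_add_adjacent_intervals
        (hint x₀ (x₀ + n)) (hint (x₀ + n) (x₀ + (n + 1)))
      rw [sum_range_succ]
      push_cast
      linarith [ih x₀]

end QuasiconcaveOn

lemma quasiconcaveOn_univ_of_monotoneOn_Iic_of_antitoneOn_Ici {f : ℝ → ℝ} {c : ℝ}
    (hmono : MonotoneOn f (Set.Iic c)) (hanti : AntitoneOn f (Set.Ici c)) :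
    QuasiconcaveOn ℝ Set.univ f := fun _ =>
  convex_iff_ordConnected.mpr ⟨fun _ hx _ hz y hy => by
    refine ⟨trivial, ?_⟩
    rcases le_total y c with hyc | hcy
    · exact hx.2.trans (hmono (hy.1.trans hyc) hyc hy.1)
    · exact hz.2.trans (hanti hcy (hcy.trans hy.2) hy.2)⟩

lemma hasDerivAt_mul_exp_neg (t : ℝ) :
    HasDerivAt (fun t => t * exp (-t)) ((1 - t) * exp (-t)) t := by
  refine ((hasDerivAt_id t).mul (hasDerivAt_neg t).exp).congr_deriv ?_
  simp only [id]
  ring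

lemma monotoneOn_mul_exp_neg : MonotoneOn (fun t => t * exp (-t)) (Set.Iic 1) :=
  monotoneOn_of_hasDerivWithinAt_nonneg (convex_Iic 1) (by fun_prop)
    (fun t _ => (hasDerivAt_mul_exp_neg t).hasDerivWithinAt) fun t ht => by
      rw [interior_Iic] at ht
      exact mul_nonneg (by linarith [ht.out]) (exp_pos _).le

lemma antitoneOn_mul_exp_neg : AntitoneOn (fun t => t * exp (-t)) (Set.Ici 1) :=
  antitoneOn_of_hasDerivWithinAt_nonpos (convex_Ici 1) (by fun_prop)
    (fun t _ => (hasDerivAt_mul_exp_neg t).hasDerivWithinAt) fun t ht => by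
      rw [interior_Ici] at ht
      exact mul_nonpos_of_nonpos_of_nonneg (by linarith [ht.out]) (exp_pos _).le

lemma quasiconcaveOn_mul_exp_neg : QuasiconcaveOn ℝ Set.univ (fun t => t * exp (-t)) :=
  quasiconcaveOn_univ_of_monotoneOn_Iic_of_antitoneOn_Ici monotoneOn_mul_exp_neg
    antitoneOn_mul_exp_neg

section GeometricProfile

variable {q : ℝ} (a : ℝ)

lemma hasDerivAt_exp_neg_mul_rpow_div_log (hq : 1 < q) (x : ℝ) :
    HasDerivAt (fun x => -exp (-(a * q ^ (x - 2))) / log q)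
      (a * q ^ (x - 2) * exp (-(a * q ^ (x - 2)))) x := by
  have hlog : log q ≠ 0 := (log_pos hq).ne'
  refine ((((hasDerivAt_id x).sub_const 2).const_rpow (by linarith)).const_mul a).neg.exp.neg
    |>.div_const (log q) |>.congr_deriv ?_
  simp only [id, Pi.neg_apply]
  field_simp

lemma integral_mul_rpow_mul_exp_neg_le (hq : 1 < q) (x₀ x₁ : ℝ) :
    ∫ x in x₀..x₁, a * q ^ (x - 2) * exp (-(a * q ^ (x - 2))) ≤
      exp (-(a * q ^ (x₀ - 2))) / log q := by
  have hlog : 0 < log q := log_pos hq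
  rw [intervalIntegral.integral_eq_sub_of_hasDerivAt
    (fun x _ => hasDerivAt_exp_neg_mul_rpow_div_log a hq x) (by
      apply Continuous.intervalIntegrable; fun_prop (disch := positivity))]
  have : 0 ≤ exp (-(a * q ^ (x₁ - 2))) / log q := by positivity
  rw [neg_div, neg_div]
  linarith

lemma rpow_sub_one_mul_exp_neg_le (ha : 0 < a) (hq : 0 < q) {x N : ℝ}
    (hN : q ^ (x - 2) ≤ N) :
    q ^ (x - 1) * exp (-(N * a)) ≤ q / a * (a * q ^ (x - 2) * exp (-(a * q ^ (x - 2)))) := by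
  calc q ^ (x - 1) * exp (-(N * a)) ≤ q ^ (x - 1) * exp (-(a * q ^ (x - 2))) := by
        gcongr q ^ _ * exp ?_
        nlinarith
    _ = q / a * (a * q ^ (x - 2) * exp (-(a * q ^ (x - 2)))) := by
        rw [show x - 1 = (x - 2) + 1 by ring, rpow_add_one hq.ne']
        field_simp

end GeometricProfile

/-- Geometric-batch summation bound: for `η̃ > 0`, `a > 0` and `n_k ≥ (1+η̃)^{k−2}`,
`Σ_{k=1}^{M} (1+η̃)^{k−1} e^{−n_k a} ≤ ((1+η̃)/a)(e^{−a/(1+η̃)}/log(1+η̃) + 1/e)`. -/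
theorem geometric_batch_sum_bound (η a : ℝ) (hη : 0 < η) (ha : 0 < a) (M : ℕ)
    (n : ℕ → ℝ) (hn : ∀ k : ℕ, 1 ≤ k → (1 + η) ^ ((k : ℝ) - 2) ≤ n k) :
    ∑ k ∈ Finset.Icc 1 M, (1 + η) ^ ((k : ℝ) - 1) * Real.exp (-(n k * a)) ≤
      ((1 + η) / a) * (Real.exp (-(a / (1 + η))) / Real.log (1 + η) + 1 / Real.exp 1) := by
  set q := 1 + η
  have hq : 1 < q := by linarith
  set g : ℝ → ℝ := fun x => a * q ^ (x - 2) * exp (-(a * q ^ (x - 2)))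
  have hg0 : ∀ x, 0 ≤ g x := fun _ => by positivity
  have hgcont : Continuous g := by fun_prop (disch := positivity)
  have hextend : ∑ k ∈ Icc 1 M, g k ≤ ∑ k ∈ range (M + 1), g (1 + k) := by
    rw [← Finset.Ico_add_one_right_eq_Icc, sum_Ico_eq_sum_range, sum_range_succ]
    simp only [Nat.add_sub_cancel, Nat.cast_add, Nat.cast_one]
    linarith [hg0 (1 + M)]
  have hquasi : QuasiconcaveOn ℝ Set.univ g :=
    quasiconcaveOn_mul_exp_neg.comp_monotone fun _ _ hxy => by
      gcongr
      linarith
  calc ∑ k ∈ Icc 1 M, q ^ ((k : ℝ) - 1) * exp (-(n k * a))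
      ≤ ∑ k ∈ Icc 1 M, q / a * g k := sum_le_sum fun k hk =>
        rpow_sub_one_mul_exp_neg_le a ha (by positivity) (hn k (mem_Icc.mp hk).1)
    _ ≤ q / a * ∑ k ∈ range (M + 1), g (1 + k) := by rw [← mul_sum]; gcongr
    _ ≤ q / a * ((∫ x in (1 : ℝ)..1 + M, g x) + exp (-1)) := by
        gcongr
        exact hquasi.sum_range_succ_le_integral_add (fun _ _ => hgcont.intervalIntegrable _ _)
          (fun _ => mul_exp_neg_le_exp_neg_one _) 1 M
    _ ≤ q / a * (exp (-(a / q)) / log q + 1 / exp 1) := by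
        gcongr
        · refine (integral_mul_rpow_mul_exp_neg_le a hq 1 _).trans_eq ?_
          rw [show (1 : ℝ) - 2 = -1 by norm_num, rpow_neg_one, ← div_eq_mul_inv]
        · rw [exp_neg, one_div]
end
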